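/- arXiv:1406.3124 — 8 statements merged into one kernel-verified Lean document; each statement's English description precedes it below -/
import Mathlib

section
/- Let G = (V,E) be a graph, k an integer, and U the set of vertices of degree at least k+1 with |U| ≤ k. If the graph G \ U (obtained by deleting U) has more than k·(k − |U|) edges, then G has no vertex cover of size at most k. -/
/-- If `U` is the set of vertices of degree at least `k+1`, `|U| ≤ k`, and the graph
obtained by deleting `U` has more than `k·(k − |U|)` edges, then `G` has no vertex cover
of size at most `k`. -/
theorem too_many_remaining_edges_no_vertex_cover {V : Type} [Fintype V] [DecidableEq V]
    (G : SimpleGraph V) [DecidableRel G.Adj] (k : ℕ) (U : Finset V)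
    (hU : U = Finset.univ.filter (fun v => k + 1 ≤ G.degree v))
    (hUk : U.card ≤ k)
    (h : k * (k - U.card) < (G.edgeFinset.filter (fun e => ∀ v ∈ e, v ∉ U)).card) :
    ¬ ∃ S : Finset V, (∀ v w, G.Adj v w → v ∈ S ∨ w ∈ S) ∧ S.card ≤ k := by
  rintro ⟨S, hcov, hSk⟩
  have hUS : U ⊆ S := by
    intro v hv
    by_contra hvS
    have hdeg : k + 1 ≤ G.degree v := by
      rw [hU] at hv; simpa using hv
    have hsub : G.neighborFinset v ⊆ S := by
      intro w hw
      rw [SimpleGraph.mem_neighborFinset] at hw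
      rcases hcov v w hw with h' | h'
      · exact absurd h' hvS
      · exact h'
    have := Finset.card_le_card hsub
    rw [SimpleGraph.card_neighborFinset_eq_degree] at this
    omega
  set F := G.edgeFinset.filter (fun e => ∀ v ∈ e, v ∉ U) with hF
  have hFsub : F ⊆ (S \ U).biUnion (fun v => G.incidenceFinset v) := by
    intro e
    refine Sym2.ind (fun v w => ?_) e
    intro he
    simp only [hF, Finset.mem_filter, SimpleGraph.mem_edgeFinset,
      SimpleGraph.mem_edgeSet] at he
    obtain ⟨heE, hnotU⟩ := he
    rcases hcov v w heE with h' | h'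
    · refine Finset.mem_biUnion.2 ⟨v, Finset.mem_sdiff.2 ⟨h', hnotU v (by simp)⟩, ?_⟩
      rw [SimpleGraph.mem_incidenceFinset]
      exact ⟨heE, by simp⟩
    · refine Finset.mem_biUnion.2 ⟨w, Finset.mem_sdiff.2 ⟨h', hnotU w (by simp)⟩, ?_⟩
      rw [SimpleGraph.mem_incidenceFinset]
      exact ⟨heE, by simp⟩
  have hdegle : ∀ v ∈ S \ U, G.degree v ≤ k := by
    intro v hv
    have : v ∉ U := (Finset.mem_sdiff.1 hv).2
    rw [hU] at this
    simp only [Finset.mem_filter, Finset.mem_univ, true_and, not_le] at this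
    omega
  have hcard : F.card ≤ (S \ U).card * k := by
    calc F.card ≤ ((S \ U).biUnion (fun v => G.incidenceFinset v)).card :=
          Finset.card_le_card hFsub
      _ ≤ ∑ v ∈ S \ U, (G.incidenceFinset v).card := Finset.card_biUnion_le
      _ ≤ ∑ v ∈ S \ U, k := by
          refine Finset.sum_le_sum fun v hv => ?_
          rw [SimpleGraph.card_incidenceFinset_eq_degree]
          exact hdegle v hv
      _ = (S \ U).card * k := by rw [Finset.sum_const, smul_eq_mul]
  have hsd : (S \ U).card = S.card - U.card := Finset.card_sdiff_of_subset hUS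
  have : (S \ U).card * k ≤ (k - U.card) * k := by
    apply Nat.mul_le_mul_right
    omega
  have hfin : F.card ≤ k * (k - U.card) := by
    calc F.card ≤ (S \ U).card * k := hcard
      _ ≤ (k - U.card) * k := this
      _ = k * (k - U.card) := Nat.mul_comm _ _
  omega
end

section
/- Let G = (V,E) be a graph, k an integer, U the set of vertices of degree at least k+1 with |U| ≤ k, and L the set of isolated vertices of G \ U. Then G has a vertex cover of size at most k if and only if G \ (U ∪ L) has a vertex cover of size at most k − |U|. -/
/-- Buss kernelization: with `U` the set of vertices of degree at least `k+1` (`|U| ≤ k`)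
and `L` the isolated vertices of `G \ U`, `G` has a vertex cover of size at most `k`
iff `G \ (U ∪ L)` has a vertex cover of size at most `k − |U|`. -/
theorem buss_kernel_correct {V : Type} [Fintype V] [DecidableEq V]
    (G : SimpleGraph V) [DecidableRel G.Adj] (k : ℕ) (U L : Finset V)
    (hU : U = Finset.univ.filter (fun v => k + 1 ≤ G.degree v))
    (hUk : U.card ≤ k)
    (hL : L = Finset.univ.filter (fun v => v ∉ U ∧ ∀ w, G.Adj v w → w ∈ U)) :
    (∃ S : Finset V, (∀ v w, G.Adj v w → v ∈ S ∨ w ∈ S) ∧ S.card ≤ k) ↔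
    (∃ S : Finset V, S ⊆ (U ∪ L)ᶜ ∧
      (∀ v w, G.Adj v w → v ∉ U ∪ L → w ∉ U ∪ L → v ∈ S ∨ w ∈ S) ∧
      S.card ≤ k - U.card) := by
  constructor
  · rintro ⟨S, hcov, hcard⟩
    have hUS : U ⊆ S := by
      intro v hv
      rw [hU, Finset.mem_filter] at hv
      by_contra hvS
      have hsub : G.neighborFinset v ⊆ S := by
        intro w hw
        rw [SimpleGraph.mem_neighborFinset] at hw
        rcases hcov v w hw with h | h
        · exact absurd h hvS
        · exact h
      have h1 := Finset.card_le_card hsub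
      have h2 : G.degree v = (G.neighborFinset v).card := rfl
      omega
    refine ⟨S \ (U ∪ L), ?_, ?_, ?_⟩
    · intro v hv
      rw [Finset.mem_compl]
      exact (Finset.mem_sdiff.mp hv).2
    · intro v w hadj hv hw
      rcases hcov v w hadj with h | h
      · exact Or.inl (Finset.mem_sdiff.mpr ⟨h, hv⟩)
      · exact Or.inr (Finset.mem_sdiff.mpr ⟨h, hw⟩)
    · have h1 : S \ (U ∪ L) ⊆ S \ U :=
        Finset.sdiff_subset_sdiff (le_refl S) Finset.subset_union_left
      have h2 := Finset.card_le_card h1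
      rw [Finset.card_sdiff_of_subset hUS] at h2
      omega
  · rintro ⟨S, hsub, hcov, hcard⟩
    refine ⟨S ∪ U, ?_, ?_⟩
    · intro v w hadj
      by_cases hv : v ∈ U
      · exact Or.inl (Finset.mem_union_right _ hv)
      by_cases hw : w ∈ U
      · exact Or.inr (Finset.mem_union_right _ hw)
      have hvL : v ∉ L := by
        intro hvL
        rw [hL, Finset.mem_filter] at hvL
        exact hw (hvL.2.2 w hadj)
      have hwL : w ∉ L := by
        intro hwL
        rw [hL, Finset.mem_filter] at hwL
        exact hv (hwL.2.2 v hadj.symm)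
      have hv' : v ∉ U ∪ L := by simp [hv, hvL]
      have hw' : w ∉ U ∪ L := by simp [hw, hwL]
      rcases hcov v w hadj hv' hw' with h | h
      · exact Or.inl (Finset.mem_union_left _ h)
      · exact Or.inr (Finset.mem_union_left _ h)
    · have := Finset.card_union_le S U
      omega
end

section
/- For a CNF formula F, a set B of variables of F is a strong Horn-backdoor set (i.e., for every truth assignment τ to B, F[τ] is Horn) if and only if B is a vertex cover of the graph G(F) whose vertices are the variables of F and which has an edge between variables u and v whenever u and v occur together as positive literals in some clause of F. -/
/-- A set `B` of variables is a strong Horn-backdoor of a CNF formula `F`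
iff `B` is a vertex cover of the positive co-occurrence graph `G(F)`.
Literals are pairs `(variable, polarity)` with `true` meaning positive. -/
theorem horn_backdoor_iff_vertex_cover {V : Type} [DecidableEq V]
    (F : Finset (Finset (V × Bool))) (B : Finset V)
    (hdistinct : ∀ C ∈ F, ∀ l ∈ C, ∀ l' ∈ C, l.1 = l'.1 → l = l') :
    (∀ τ : V → Bool, ∀ C ∈ F,
        (¬ ∃ l ∈ C, l.1 ∈ B ∧ τ l.1 = l.2) →
        (C.filter (fun l => l.1 ∉ B ∧ l.2 = true)).card ≤ 1) ↔
    (∀ u v : V, u ≠ v → (∃ C ∈ F, (u, true) ∈ C ∧ (v, true) ∈ C) → u ∈ B ∨ v ∈ B) := by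
  constructor
  · intro h u v huv ⟨C, hC, hu, hv⟩
    by_contra hB
    push_neg at hB
    set τ : V → Bool := fun x => !((x, true) ∈ C : Bool) with hτ
    have hsat : ¬ ∃ l ∈ C, l.1 ∈ B ∧ τ l.1 = l.2 := by
      rintro ⟨l, hl, -, heq⟩
      cases hl2 : l.2 with
      | true =>
        rw [hl2, hτ] at heq
        simp only [Bool.not_eq_true', decide_eq_false_iff_not] at heq
        exact heq (by rw [show (l.1, true) = l from (Prod.ext rfl hl2.symm)]; exact hl)
      | false =>
        rw [hl2, hτ] at heq
        simp at heq
        have := hdistinct C hC l hl (l.1, true) heq rfl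
        rw [this] at hl2
        simp at hl2
    have hle := h τ C hC hsat
    have h2 : 1 < (C.filter (fun l => l.1 ∉ B ∧ l.2 = true)).card := by
      apply Finset.one_lt_card.mpr
      refine ⟨(u, true), ?_, (v, true), ?_, ?_⟩
      · simp [Finset.mem_filter, hu, hB.1]
      · simp [Finset.mem_filter, hv, hB.2]
      · simp [huv]
    omega
  · intro h τ C hC _
    by_contra hcard
    push_neg at hcard
    obtain ⟨l, hl, l', hl', hne⟩ := Finset.one_lt_card.mp hcard
    simp only [Finset.mem_filter] at hl hl'
    have hvne : l.1 ≠ l'.1 := fun hv =>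
      hne (hdistinct C hC l hl.1 l' hl'.1 hv)
    have := h l.1 l'.1 hvne ⟨C, hC, ?_, ?_⟩
    · rcases this with h1 | h1
      exacts [hl.2.1 h1, hl'.2.1 h1]
    · rw [show (l.1, true) = l from (Prod.ext rfl hl.2.2.symm)]; exact hl.1
    · rw [show (l'.1, true) = l' from (Prod.ext rfl hl'.2.2.symm)]; exact hl'.1
end

section
/- Let F be a CNF formula with variables x_1,…,x_n and clauses C_1,…,C_m. Consider the constraint with variables X = {x_1,…,x_n, C_1,…,C_m}, domains dom(x_i) = {−i, i} and dom(C_j) = { i : x_i ∈ C_j } ∪ { −i : ¬x_i ∈ C_j }, and the requirement that an instantiation α uses exactly n distinct values, i.e., |{α(z) : z ∈ X}| = n. Then F is satisfiable if and only if such an instantiation exists. -/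
def litVal {n : ℕ} (l : Fin n × Bool) : ℤ :=
  if l.2 then ((l.1 : ℕ) + 1 : ℤ) else -((l.1 : ℕ) + 1 : ℤ)

lemma litVal_natAbs {n : ℕ} (l : Fin n × Bool) : (litVal l).natAbs = (l.1 : ℕ) + 1 := by
  unfold litVal; split <;> omega

lemma litVal_inj {n : ℕ} : Function.Injective (litVal (n := n)) := by
  rintro ⟨i, b⟩ ⟨i', b'⟩ h
  unfold litVal at h
  have hi : (i : ℕ) = (i' : ℕ) ∧ b = b' := by
    cases b <;> cases b' <;> simp only [if_true, if_false, Bool.false_eq_true] at h <;>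
      constructor <;> first | rfl | omega
  exact Prod.ext (Fin.ext hi.1) hi.2

/-- NValue encoding of SAT: a CNF formula `F` (clauses `C j`) is satisfiable iff there
is an instantiation `α` of the variables `x_1,…,x_n,C_1,…,C_m` with
`α(x_i) ∈ {−i, i}`, `α(C_j) ∈ dom(C_j)`, using exactly `n` distinct values. -/
theorem sat_iff_nvalue_instantiation (n m : ℕ) (C : Fin m → Finset (Fin n × Bool)) :
    (∃ σ : Fin n → Bool, ∀ j, ∃ l ∈ C j, σ l.1 = l.2) ↔
    (∃ α : Fin n ⊕ Fin m → ℤ,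
      (∀ i, α (Sum.inl i) = ((i : ℕ) + 1 : ℤ) ∨ α (Sum.inl i) = -((i : ℕ) + 1 : ℤ)) ∧
      (∀ j, ∃ l ∈ C j, α (Sum.inr j) = litVal l) ∧
      (Finset.univ.image α).card = n) := by
  constructor
  · rintro ⟨σ, hσ⟩
    choose l hl hsat using hσ
    refine ⟨Sum.elim (fun i => litVal (i, σ i)) (fun j => litVal (l j)), ?_, ?_, ?_⟩
    · intro i
      simp only [Sum.elim_inl, litVal]
      cases σ i <;> simp
    · intro j
      exact ⟨l j, hl j, rfl⟩
    · have himg : Finset.univ.image (Sum.elim (fun i : Fin n => litVal (i, σ i))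
          (fun j : Fin m => litVal (l j)))
          = Finset.univ.image (fun i : Fin n => litVal (i, σ i)) := by
        apply Finset.Subset.antisymm
        · intro v hv
          simp only [Finset.mem_image, Finset.mem_univ, true_and] at hv ⊢
          obtain ⟨z, hz⟩ := hv
          cases z with
          | inl i => exact ⟨i, hz⟩
          | inr j =>
            refine ⟨(l j).1, ?_⟩
            rw [← hz]
            simp only [Sum.elim_inr]
            congr 1
            exact Prod.ext rfl (hsat j)
        · intro v hv
          simp only [Finset.mem_image, Finset.mem_univ, true_and] at hv ⊢
          obtain ⟨i, hi⟩ := hv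
          exact ⟨Sum.inl i, hi⟩
      rw [himg, Finset.card_image_of_injective _ (fun i i' h => by
        have := litVal_inj h; exact (Prod.ext_iff.mp this).1), Finset.card_univ,
        Fintype.card_fin]
  · rintro ⟨α, h1, h2, h3⟩
    have habs : ∀ i : Fin n, (α (Sum.inl i)).natAbs = (i : ℕ) + 1 := by
      intro i; rcases h1 i with h | h <;> rw [h] <;> omega
    have hinj : Function.Injective (fun i : Fin n => α (Sum.inl i)) := by
      intro i i' h
      have := congrArg Int.natAbs h
      simp only [habs] at this
      exact Fin.ext (by omega)
    set T := Finset.univ.image (fun i : Fin n => α (Sum.inl i)) with hT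
    have hTcard : T.card = n := by
      rw [hT, Finset.card_image_of_injective _ hinj, Finset.card_univ, Fintype.card_fin]
    have hsub : T ⊆ Finset.univ.image α := by
      intro v hv
      simp only [hT, Finset.mem_image, Finset.mem_univ, true_and] at hv ⊢
      obtain ⟨i, hi⟩ := hv
      exact ⟨Sum.inl i, hi⟩
    have hTeq : T = Finset.univ.image α :=
      Finset.eq_of_subset_of_card_le hsub (by rw [hTcard, h3])
    refine ⟨fun i => decide (0 < α (Sum.inl i)), fun j => ?_⟩
    obtain ⟨l, hl, heq⟩ := h2 j
    refine ⟨l, hl, ?_⟩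
    have hmem : α (Sum.inr j) ∈ T := by
      rw [hTeq]
      exact Finset.mem_image.mpr ⟨Sum.inr j, Finset.mem_univ _, rfl⟩
    simp only [hT, Finset.mem_image, Finset.mem_univ, true_and] at hmem
    obtain ⟨i, hi⟩ := hmem
    have hval : α (Sum.inl i) = litVal l := by rw [hi, heq]
    have : (i : ℕ) = (l.1 : ℕ) := by
      have := congrArg Int.natAbs hval
      rw [habs, litVal_natAbs] at this
      omega
    have hil : i = l.1 := Fin.ext this
    rw [← hil]
    cases hb : l.2 with
    | true =>
      have : α (Sum.inl i) = ((l.1 : ℕ) + 1 : ℤ) := by rw [hval]; simp [litVal, hb]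
      simp only [this]
      simp only [decide_eq_true_eq]
      omega
    | false =>
      have : α (Sum.inl i) = -((l.1 : ℕ) + 1 : ℤ) := by rw [hval]; simp [litVal, hb]
      simp only [this, decide_eq_false_iff_not, not_lt]
      omega
end

section
/- The AtMost-NValue reduction rule Red-Unit is sound: if some variable x has |dom(x)| = 1 with dom(x) = {v}, then the instance (X, D, dom, N) has a solution if and only if the instance obtained by removing all variables whose domain contains v, removing v from D (and from all domains), and decrementing N by one, has a solution. -/
/-- Soundness of reduction rule Red-Unit for AtMost-NValue: if `dom x = {v}` for a
variable `x ∈ X`, then the instance has a solution iff the instance obtained by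
selecting `v` (removing all variables whose domain contains `v`, removing `v` from `D`
and all domains, and decrementing `N`) has a solution. -/
theorem redUnit_sound {VT D : Type} [DecidableEq VT] [DecidableEq D]
    (X : Finset VT) (Dset : Finset D) (dom : VT → Finset D) (N : ℕ) (x : VT) (v : D)
    (hx : x ∈ X) (hv : v ∈ Dset) (hdomsub : ∀ y ∈ X, dom y ⊆ Dset)
    (hunit : dom x = {v}) :
    (∃ S ⊆ Dset, S.card ≤ N ∧ ∀ y ∈ X, (dom y ∩ S).Nonempty) ↔
    (∃ S ⊆ Dset.erase v, (S.card : ℤ) ≤ (N : ℤ) - 1 ∧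
      ∀ y ∈ X.filter (fun y => v ∉ dom y), ((dom y).erase v ∩ S).Nonempty) := by
  constructor
  · rintro ⟨S, hS, hcard, hhit⟩
    have hvS : v ∈ S := by
      obtain ⟨w, hw⟩ := hhit x hx
      rw [hunit] at hw
      simp only [Finset.mem_inter, Finset.mem_singleton] at hw
      rcases hw with ⟨rfl, h⟩; exact h
    refine ⟨S.erase v, ?_, ?_, ?_⟩
    · intro w hw
      exact Finset.mem_erase.mpr ⟨(Finset.mem_erase.mp hw).1,
        hS (Finset.mem_erase.mp hw).2⟩
    · have h1 : (S.erase v).card = S.card - 1 := Finset.card_erase_of_mem hvS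
      have h2 : 1 ≤ S.card := Finset.card_pos.mpr ⟨v, hvS⟩
      omega
    · intro y hy
      simp only [Finset.mem_filter] at hy
      obtain ⟨w, hw⟩ := hhit y hy.1
      simp only [Finset.mem_inter] at hw
      have hwv : w ≠ v := fun h => hy.2 (h ▸ hw.1)
      exact ⟨w, Finset.mem_inter.mpr ⟨Finset.mem_erase.mpr ⟨hwv, hw.1⟩,
        Finset.mem_erase.mpr ⟨hwv, hw.2⟩⟩⟩
  · rintro ⟨S, hS, hcard, hhit⟩
    have hvS : v ∉ S := fun h => (Finset.mem_erase.mp (hS h)).1 rfl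
    refine ⟨insert v S, ?_, ?_, ?_⟩
    · intro w hw
      rcases Finset.mem_insert.mp hw with rfl | h
      · exact hv
      · exact (Finset.mem_erase.mp (hS h)).2
    · have := Finset.card_insert_of_notMem hvS
      omega
    · intro y hy
      by_cases hvy : v ∈ dom y
      · exact ⟨v, Finset.mem_inter.mpr ⟨hvy, Finset.mem_insert_self _ _⟩⟩
      · obtain ⟨w, hw⟩ := hhit y (Finset.mem_filter.mpr ⟨hy, hvy⟩)
        simp only [Finset.mem_inter, Finset.mem_erase] at hw
        exact ⟨w, Finset.mem_inter.mpr ⟨hw.1.2,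
          Finset.mem_insert_of_mem hw.2⟩⟩
end

section
/- The AtMost-NValue reduction rule Red-⊆ is sound: if x and x' are variables with dom(x') ⊆ dom(x), then the instance (X, D, dom, N) has a solution if and only if the instance with variable x removed has a solution. -/
/-- Soundness of reduction rule Red-⊆ for AtMost-NValue: if `dom x' ⊆ dom x` for two
distinct variables `x, x' ∈ X`, then the instance has a solution iff the instance with
variable `x` removed has a solution. -/
theorem redSubseteq_sound {VT D : Type} [DecidableEq VT] [DecidableEq D]
    (X : Finset VT) (Dset : Finset D) (dom : VT → Finset D) (N : ℕ) (x x' : VT)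
    (hx : x ∈ X) (hx' : x' ∈ X) (hne : x' ≠ x)
    (hdomsub : ∀ y ∈ X, dom y ⊆ Dset)
    (hsub : dom x' ⊆ dom x) :
    (∃ S ⊆ Dset, S.card ≤ N ∧ ∀ y ∈ X, (dom y ∩ S).Nonempty) ↔
    (∃ S ⊆ Dset, S.card ≤ N ∧ ∀ y ∈ X.erase x, (dom y ∩ S).Nonempty) := by
  constructor
  · rintro ⟨S, hS, hc, h⟩
    exact ⟨S, hS, hc, fun y hy => h y (Finset.mem_of_mem_erase hy)⟩
  · rintro ⟨S, hS, hc, h⟩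
    refine ⟨S, hS, hc, fun y hy => ?_⟩
    by_cases hyx : y = x
    · subst hyx
      obtain ⟨d, hd⟩ := h x' (Finset.mem_erase.mpr ⟨hne, hx'⟩)
      rw [Finset.mem_inter] at hd
      exact ⟨d, Finset.mem_inter.mpr ⟨hsub hd.1, hd.2⟩⟩
    · exact h y (Finset.mem_erase.mpr ⟨hyx, hy⟩)
end

section
/- Soundness of the composition construction for CSP over {0,1}: let I_1, …, I_t be Boolean constraint networks on pairwise disjoint variable sets, and let I be the network on their variables together with new variables a_1,…,a_t, b_0,…,b_t, constructed by: (1) replacing each constraint C = (S, R) of I_i by C' = (S·a_i, R') where R' = { (u,0) : u ∈ R } ∪ {(1,…,1)}; (2) ternary constraints ((b_{i−1}, b_i, a_i), {(0,0,1),(0,1,0),(1,1,1)}) for 1 ≤ i ≤ t; (3) unary constraints forcing b_0 = 0 and b_t = 1. Then I is satisfiable if and only if some I_i is satisfiable. -/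
/-- Soundness of the composition construction for Boolean CSP: the composed network
`I` (with fresh variables `a_1,…,a_t` and `b_0,…,b_t`, modified constraints of
group (1), chain constraints of group (2), and unary constraints `b_0 = 0`,
`b_t = 1` of group (3)) is satisfiable iff some component network `I_i` is. -/
theorem csp_composition_sound (t : ℕ) (V : Fin t → Type)
    (𝒞 : ∀ i, Set (List (V i) × Set (List Bool))) :
    (∃ α : ((Σ i, V i) ⊕ (Fin t ⊕ Fin (t + 1))) → Bool,
      -- group (1): for each original constraint C of network i, the extended
      -- relation R' = {(u,0) : u ∈ R} ∪ {(1,…,1)}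
      (∀ i, ∀ C ∈ 𝒞 i,
        (α (Sum.inr (Sum.inl i)) = false ∧
          C.1.map (fun v => α (Sum.inl ⟨i, v⟩)) ∈ C.2) ∨
        (α (Sum.inr (Sum.inl i)) = true ∧
          ∀ v ∈ C.1, α (Sum.inl ⟨i, v⟩) = true)) ∧
      -- group (2): (b_{i−1}, b_i, a_i) ∈ {(0,0,1),(0,1,0),(1,1,1)}
      (∀ i : Fin t,
        (α (Sum.inr (Sum.inr i.castSucc)) = false ∧
          α (Sum.inr (Sum.inr i.succ)) = false ∧
          α (Sum.inr (Sum.inl i)) = true) ∨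
        (α (Sum.inr (Sum.inr i.castSucc)) = false ∧
          α (Sum.inr (Sum.inr i.succ)) = true ∧
          α (Sum.inr (Sum.inl i)) = false) ∨
        (α (Sum.inr (Sum.inr i.castSucc)) = true ∧
          α (Sum.inr (Sum.inr i.succ)) = true ∧
          α (Sum.inr (Sum.inl i)) = true)) ∧
      -- group (3): b_0 = 0 and b_t = 1
      α (Sum.inr (Sum.inr 0)) = false ∧
      α (Sum.inr (Sum.inr (Fin.last t))) = true) ↔
    (∃ i, ∃ β : V i → Bool, ∀ C ∈ 𝒞 i, C.1.map β ∈ C.2) := by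
  constructor
  · rintro ⟨α, h1, h2, h0, ht⟩
    -- find a flip point
    have hflip : ∃ i : Fin t,
        α (Sum.inr (Sum.inr i.castSucc)) = false ∧
        α (Sum.inr (Sum.inr i.succ)) = true := by
      by_contra hc
      push_neg at hc
      have hall : ∀ k : Fin (t + 1), α (Sum.inr (Sum.inr k)) = false := by
        intro k
        induction k using Fin.induction with
        | zero => exact h0
        | succ i ih =>
          cases hsucc : α (Sum.inr (Sum.inr i.succ)) with
          | false => rfl
          | true => exact absurd hsucc (hc i ih)
      rw [hall (Fin.last t)] at ht
      exact absurd ht (by simp)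
    obtain ⟨i, hcs, hs⟩ := hflip
    have ha : α (Sum.inr (Sum.inl i)) = false := by
      rcases h2 i with ⟨_, h, _⟩ | ⟨_, _, h⟩ | ⟨h, _, _⟩
      · rw [hs] at h; exact absurd h (by simp)
      · exact h
      · rw [hcs] at h; exact absurd h (by simp)
    refine ⟨i, fun v => α (Sum.inl ⟨i, v⟩), fun C hC => ?_⟩
    rcases h1 i C hC with ⟨_, hmem⟩ | ⟨h, _⟩
    · exact hmem
    · rw [ha] at h; exact absurd h (by simp)
  · rintro ⟨i, β, hβ⟩
    classical
    set γ : ∀ j, V j → Bool := Function.update (fun _ _ => true) i β with hγ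
    refine ⟨fun x => match x with
      | Sum.inl ⟨j, v⟩ => γ j v
      | Sum.inr (Sum.inl j) => decide (j ≠ i)
      | Sum.inr (Sum.inr k) => decide ((i : ℕ) < (k : ℕ)), ?_, ?_, ?_, ?_⟩
    · intro j C hC
      by_cases hj : j = i
      · subst hj
        left
        constructor
        · simp
        · have : (fun v => γ j v) = β := by
            rw [hγ, Function.update_self]
          rw [this]
          exact hβ C hC
      · right
        constructor
        · simp [hj]
        · intro v _
          simp only
          rw [hγ, Function.update_of_ne hj]
    · intro j
      rcases lt_trichotomy (j : ℕ) (i : ℕ) with h | h | h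
      · left
        have hji : j ≠ i := fun e => by simp [e] at h
        refine ⟨?_, ?_, ?_⟩ <;> simp [Fin.val_succ, hji] <;> try omega
      · right; left
        have hji : j = i := Fin.ext h
        refine ⟨?_, ?_, ?_⟩ <;> simp [Fin.val_succ, hji] <;> try omega
      · right; right
        have hji : j ≠ i := fun e => by simp [e] at h
        refine ⟨?_, ?_, ?_⟩ <;> simp [Fin.val_succ, hji] <;> try omega
    · simp
    · simp
end

section
/- In the CSP composition construction, the constraints of groups (2) and (3) (the chain constraints on b_0,…,b_t, a_1,…,a_t with R* = {(0,0,1),(0,1,0),(1,1,1)}, b_0 = 0, b_t = 1) admit exactly t satisfying assignments, and in each of them there is a unique index i with a_i = 0, b_0 = … = b_{i−1} = 0 and b_i = … = b_t = 1, and a_j = 1 for all j ≠ i. -/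
/-- The chain constraints of groups (2) and (3): for each `i`,
`(b_{i−1}, b_i, a_i) ∈ {(0,0,1),(0,1,0),(1,1,1)}`, together with `b_0 = 0` and
`b_t = 1`. Here `p.1` assigns the `a`-variables and `p.2` the `b`-variables. -/
def ChainSat {t : ℕ} (p : (Fin t → Bool) × (Fin (t + 1) → Bool)) : Prop :=
  (∀ i : Fin t,
    (p.2 i.castSucc = false ∧ p.2 i.succ = false ∧ p.1 i = true) ∨
    (p.2 i.castSucc = false ∧ p.2 i.succ = true ∧ p.1 i = false) ∨
    (p.2 i.castSucc = true ∧ p.2 i.succ = true ∧ p.1 i = true)) ∧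
  p.2 0 = false ∧ p.2 (Fin.last t) = true

def chainSol (t : ℕ) (i : Fin t) : (Fin t → Bool) × (Fin (t + 1) → Bool) :=
  (fun j => decide (j ≠ i), fun j => decide ((i : ℕ) < (j : ℕ)))

lemma chainSol_sat (t : ℕ) (i : Fin t) : ChainSat (chainSol t i) := by
  refine ⟨?_, ?_, ?_⟩
  · intro j
    simp only [chainSol, Fin.coe_castSucc, Fin.val_succ, decide_eq_true_eq,
      decide_eq_false_iff_not, ne_eq, Fin.ext_iff, not_not]
    rcases lt_trichotomy (j : ℕ) (i : ℕ) with h | h | h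
    · left; refine ⟨by omega, by omega, by omega⟩
    · right; left; exact ⟨by omega, by omega, by omega⟩
    · right; right; exact ⟨by omega, by omega, by omega⟩
  · simp [chainSol]
  · simp only [chainSol, Fin.val_last, decide_eq_true_eq]; exact i.2

lemma chainSat_iff {t : ℕ} (p : (Fin t → Bool) × (Fin (t + 1) → Bool)) :
    ChainSat p ↔ ∃ i : Fin t, p = chainSol t i := by
  constructor
  · rintro ⟨hc, h0, ht⟩
    set c : ℕ → Bool := fun n => if h : n < t + 1 then p.2 ⟨n, h⟩ else true with hcdef
    have hct : c t = true := by simp only [hcdef, dif_pos (Nat.lt_succ_self t)]; exact ht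
    have hc0 : c 0 = false := by simpa [hcdef] using h0
    have hstep : ∀ n, c n = true → c (n + 1) = true := by
      intro n hn
      by_cases h : n + 1 < t + 1
      · have h' : n < t + 1 := by omega
        have hn' : p.2 ⟨n, h'⟩ = true := by simpa only [hcdef, dif_pos h'] using hn
        have hgoal : c (n + 1) = p.2 ⟨n + 1, h⟩ := by simp only [hcdef, dif_pos h]
        rw [hgoal]
        rcases hc ⟨n, by omega⟩ with ⟨c1, c2, _⟩ | ⟨c1, c2, _⟩ | ⟨c1, c2, _⟩ <;>
          simp only [Fin.castSucc_mk, Fin.succ_mk] at c1 c2 <;>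
          first
            | exact c2
            | (exfalso; rw [hn'] at c1; exact absurd c1 (by simp))
      · simp only [hcdef, dif_neg h]
    have hmono : ∀ m n, n ≤ m → c n = true → c m = true := by
      intro m
      induction m with
      | zero => intro n hnm hn; rwa [Nat.le_zero.mp hnm] at hn
      | succ k ih =>
        intro n hnm hn
        rcases Nat.lt_or_ge n (k + 1) with h | h
        · exact hstep k (ih n (by omega) hn)
        · have : n = k + 1 := by omega
          rwa [← this]
    have hex : ∃ n, c n = true := ⟨t, hct⟩
    set i0 := Nat.find hex with hi0
    have hi0t : i0 ≤ t := Nat.find_min' hex hct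
    have hi0pos : 0 < i0 := by
      rcases Nat.eq_zero_or_pos i0 with h | h
      · exfalso; have := Nat.find_spec hex; rw [← hi0, h] at this; rw [hc0] at this; exact Bool.false_ne_true this
      · exact h
    have hcval : ∀ n, c n = decide (i0 ≤ n) := by
      intro n
      rcases Nat.lt_or_ge n i0 with h | h
      · have := Nat.find_min hex h
        simp only [Bool.not_eq_true] at this
        simp [this]; omega
      · have := hmono n i0 h (Nat.find_spec hex)
        simp [this, h]
    refine ⟨⟨i0 - 1, by omega⟩, ?_⟩
    have hb : ∀ j : Fin (t + 1), p.2 j = decide (i0 - 1 < (j : ℕ)) := by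
      intro j
      have : p.2 j = c (j : ℕ) := by
        show p.2 j = if h : (j : ℕ) < t + 1 then p.2 ⟨(j : ℕ), h⟩ else true
        rw [dif_pos j.2]
      rw [this, hcval]
      simp only [decide_eq_decide]
      omega
    have hbsucc : ∀ j : Fin t, p.2 j.succ = decide ((j:ℕ) + 1 > i0 - 1) := by
      intro j; rw [hb]; simp
    have hbcast : ∀ j : Fin t, p.2 j.castSucc = decide ((j:ℕ) > i0 - 1) := by
      intro j; rw [hb]; simp
    ext j
    · show p.1 j = decide (j ≠ (⟨i0 - 1, by omega⟩ : Fin t))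
      rcases hc j with ⟨c1, c2, c3⟩ | ⟨c1, c2, c3⟩ | ⟨c1, c2, c3⟩ <;>
        rw [hbcast] at c1 <;> rw [hbsucc] at c2 <;>
        simp only [decide_eq_true_eq, decide_eq_false_iff_not, not_lt, gt_iff_lt] at c1 c2 <;>
        rw [c3] <;> symm <;>
        simp only [ne_eq, Fin.ext_iff, decide_eq_true_eq, decide_eq_false_iff_not,
          not_not] <;> omega
    · exact hb j
  · rintro ⟨i, rfl⟩; exact chainSol_sat t i

lemma chainSol_inj (t : ℕ) : Function.Injective (chainSol t) := by
  intro i j h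
  have := congrArg (fun p => p.1 i) h
  simp only [chainSol, decide_eq_true_eq, ne_eq, not_not] at this
  by_contra hne
  simp [hne] at this

/-- The chain constraints admit exactly `t` satisfying assignments, and in each of
them there is a unique index `i` with `a_i = 0`, `b_0 = … = b_{i−1} = 0`,
`b_i = … = b_t = 1`, and `a_j = 1` for all `j ≠ i`. -/
theorem chain_constraints_solutions (t : ℕ) :
    {p : (Fin t → Bool) × (Fin (t + 1) → Bool) | ChainSat p}.ncard = t ∧
    ∀ p : (Fin t → Bool) × (Fin (t + 1) → Bool), ChainSat p →
      ∃! i : Fin t, p.1 i = false ∧ (∀ j : Fin t, j ≠ i → p.1 j = true) ∧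
        ∀ j : Fin (t + 1),
          ((j : ℕ) ≤ (i : ℕ) → p.2 j = false) ∧ ((i : ℕ) < (j : ℕ) → p.2 j = true) := by
  constructor
  · have hset : {p : (Fin t → Bool) × (Fin (t + 1) → Bool) | ChainSat p} =
        Set.range (chainSol t) := by
      ext p; simp [chainSat_iff, eq_comm, Set.mem_range]
    rw [hset, ← Nat.card_coe_set_eq, Nat.card_range_of_injective (chainSol_inj t)]
    simp
  · intro p hp
    obtain ⟨i, rfl⟩ := (chainSat_iff p).mp hp
    refine ⟨i, ⟨by simp [chainSol], fun j hj => by simp [chainSol, hj], fun j => ?_⟩, ?_⟩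
    · constructor <;> intro h <;> simp [chainSol] <;> omega
    · intro i' hi'
      have := hi'.1
      simp only [chainSol, decide_eq_false_iff_not, ne_eq, not_not] at this
      exact this
end
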